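/- Let ĝ(θ) = ‖G(θ)‖² − |G(θ)*q̂|² with ‖q̂‖ ≤ 1, and suppose x = Σ_{θ_k ∈ Θ} G(θ_k)c_k (all c_k ≠ 0, θ_k pairwise distinct) satisfies Re⟨q̂, x⟩ = ‖x‖_A = Σ_k |c_k|‖G(θ_k)‖ with |G(θ)*q̂| ≤ ‖G(θ)‖ for all θ. Then every true frequency is recovered: Θ ⊆ Θ̂ := {θ : ĝ(θ) = 0}. -/

import Mathlib

open Matrix

noncomputable def Gv {n : ℕ} (A : Matrix (Fin n) (Fin n) ℂ) (b : Fin n → ℂ) (θ : ℝ) :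
    Fin n → ℂ :=
  ((1 : Matrix (Fin n) (Fin n) ℂ) - Complex.exp (-(θ : ℂ) * Complex.I) • A)⁻¹ *ᵥ b

/-- Euclidean norm on ℂⁿ. -/
noncomputable def enorm {n : ℕ} (v : Fin n → ℂ) : ℝ :=
  Real.sqrt (∑ i, Complex.normSq (v i))

/-- The atomic norm associated with the atoms G(θ), θ ∈ [0, 2π). -/
noncomputable def atomicNorm {n : ℕ} (A : Matrix (Fin n) (Fin n) ℂ) (b : Fin n → ℂ)
    (x : Fin n → ℂ) : ℝ :=
  sInf { t : ℝ | ∃ (m : ℕ) (θ : Fin m → ℝ) (c : Fin m → ℂ),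
    (∀ k, θ k ∈ Set.Ico (0 : ℝ) (2 * Real.pi)) ∧
    x = ∑ k, c k • Gv A b (θ k) ∧
    t = ∑ k, ‖c k‖ * _root_.enorm (Gv A b (θ k)) }

/-!
Each summand of `Re ⟨q̂, x⟩ = Σ Re (conj cₖ · G(θₖ)* q̂)` is at most `|cₖ| ‖G(θₖ)‖`, so equality of
the sums forces equality termwise; since `cₖ ≠ 0`, this gives `|G(θₖ)* q̂| = ‖G(θₖ)‖`.
-/

theorem star_sum_smul_dotProduct {ι 𝕜 : Type*} {n : ℕ} [RCLike 𝕜] (s : Finset ι) (c : ι → 𝕜)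
    (v : ι → Fin n → 𝕜) (q : Fin n → 𝕜) :
    star (∑ k ∈ s, c k • v k) ⬝ᵥ q = ∑ k ∈ s, star (c k) * (star (v k) ⬝ᵥ q) := by
  simp only [star_sum, star_smul, sum_dotProduct, smul_dotProduct, smul_eq_mul]

theorem RCLike.re_star_mul_le {𝕜 : Type*} [RCLike 𝕜] (c z : 𝕜) :
    RCLike.re (star c * z) ≤ ‖c‖ * ‖z‖ :=
  calc RCLike.re (star c * z) ≤ ‖star c * z‖ := RCLike.re_le_norm _
    _ = ‖c‖ * ‖z‖ := by rw [norm_mul, norm_star]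

theorem norm_eq_of_sum_re_star_mul_eq {ι 𝕜 : Type*} [RCLike 𝕜] {s : Finset ι} {c z : ι → 𝕜}
    {r : ι → ℝ} (hz : ∀ k ∈ s, ‖z k‖ ≤ r k) (hc : ∀ k ∈ s, c k ≠ 0)
    (h : ∑ k ∈ s, RCLike.re (star (c k) * z k) = ∑ k ∈ s, ‖c k‖ * r k) :
    ∀ k ∈ s, ‖z k‖ = r k := by
  have hle : ∀ k ∈ s, RCLike.re (star (c k) * z k) ≤ ‖c k‖ * r k := fun k hk =>
    (RCLike.re_star_mul_le _ _).trans (mul_le_mul_of_nonneg_left (hz k hk) (norm_nonneg _))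
  intro k hk
  have hk_eq := (Finset.sum_eq_sum_iff_of_le hle).1 h k hk
  have hr_le : ‖c k‖ * r k ≤ ‖c k‖ * ‖z k‖ := hk_eq ▸ RCLike.re_star_mul_le _ _
  exact le_antisymm (hz k hk) (le_of_mul_le_mul_left hr_le (norm_pos_iff.2 (hc k hk)))

theorem stmt16_general {n m : ℕ} (A : Matrix (Fin n) (Fin n) ℂ) (b : Fin n → ℂ)
    (θ : Fin m → ℝ)
    (c : Fin m → ℂ) (hc : ∀ k, c k ≠ 0)
    (x : Fin n → ℂ) (hx : x = ∑ k, c k • Gv A b (θ k))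
    (qhat : Fin n → ℂ)
    (hbound : ∀ θ' : ℝ, ‖star (Gv A b θ') ⬝ᵥ qhat‖ ≤ _root_.enorm (Gv A b θ'))
    (hAnorm : atomicNorm A b x = ∑ k, ‖c k‖ * _root_.enorm (Gv A b (θ k)))
    (hopt : (star x ⬝ᵥ qhat).re = atomicNorm A b x) :
    ∀ k, _root_.enorm (Gv A b (θ k)) ^ 2 - ‖star (Gv A b (θ k)) ⬝ᵥ qhat‖ ^ 2 = 0 := by
  have hsum : ∑ k, (star (c k) * (star (Gv A b (θ k)) ⬝ᵥ qhat)).re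
      = ∑ k, ‖c k‖ * _root_.enorm (Gv A b (θ k)) := by
    rw [← Complex.re_sum, ← star_sum_smul_dotProduct, ← hx, hopt, hAnorm]
  intro k
  rw [norm_eq_of_sum_re_star_mul_eq (fun k _ => hbound (θ k)) (fun k _ => hc k) hsum k
    (Finset.mem_univ k), sub_self]

theorem stmt16 {n m : ℕ} (A : Matrix (Fin n) (Fin n) ℂ) (b : Fin n → ℂ) (hm : m < n)
    (θ : Fin m → ℝ) (hθmem : ∀ k, θ k ∈ Set.Ico (0 : ℝ) (2 * Real.pi))
    (hθinj : Function.Injective θ)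
    (c : Fin m → ℂ) (hc : ∀ k, c k ≠ 0)
    (x : Fin n → ℂ) (hx : x = ∑ k, c k • Gv A b (θ k))
    (qhat : Fin n → ℂ) (hqhat : _root_.enorm qhat ≤ 1)
    (hbound : ∀ θ' : ℝ, ‖star (Gv A b θ') ⬝ᵥ qhat‖ ≤ _root_.enorm (Gv A b θ'))
    (hAnorm : atomicNorm A b x = ∑ k, ‖c k‖ * _root_.enorm (Gv A b (θ k)))
    (hopt : (star x ⬝ᵥ qhat).re = atomicNorm A b x) :
    ∀ k, _root_.enorm (Gv A b (θ k)) ^ 2 - ‖star (Gv A b (θ k)) ⬝ᵥ qhat‖ ^ 2 = 0 :=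
  stmt16_general A b θ c hc x hx qhat hbound hAnorm hopt
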